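/- Let Q*W(x₀;·|·) be as defined above, with QW additionally satisfying the coercivity β'|F|^p ≤ QW(x;F). If F̄_n → F̄ in ℝ^{3×2} and z_n → z in ℝ³, then Q*W(x₀; F̄|z) ≤ liminf_n Q*W(x₀; F̄_n|z_n). -/

import Mathlib

open MeasureTheory Filter Topology

noncomputable section

abbrev E2 : Type := Fin 2 → ℝ
abbrev E3 : Type := Fin 3 → ℝ
abbrev M33 : Type := Matrix (Fin 3) (Fin 3) ℝ
abbrev M32 : Type := Matrix (Fin 3) (Fin 2) ℝ

/-- Euclidean norm on ℝ³. -/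
def vnorm3 (z : E3) : ℝ := Real.sqrt (∑ i, z i ^ 2)

/-- Frobenius norm on 3×3 matrices. -/
def mnorm33 (F : M33) : ℝ := Real.sqrt (∑ i, ∑ j, F i j ^ 2)

/-- Frobenius norm on 3×2 matrices. -/
def mnorm32 (F : M32) : ℝ := Real.sqrt (∑ i, ∑ j, F i j ^ 2)

/-- The 3×3 matrix (F̄|z) whose first two columns are those of F̄ and whose third
column is z. -/
def cols (Fb : M32) (z : E3) : M33 :=
  Matrix.of fun i j => if hj : (j : ℕ) < 2 then Fb i ⟨j, hj⟩ else z i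

/-- Q' × (−1,1) where Q' = (0,1)². -/
def stripset : Set (E2 × ℝ) :=
  {x | (∀ j, x.1 j ∈ Set.Ioo (0 : ℝ) 1) ∧ x.2 ∈ Set.Ioo (-1 : ℝ) 1}

/-- In-plane gradient D_αφ as a 3×2 matrix. -/
def Dalpha (φ : E2 × ℝ → E3) (x : E2 × ℝ) : M32 :=
  Matrix.of fun i j => fderiv ℝ φ x (Pi.single j (1 : ℝ), 0) i

/-- Transverse derivative D₃φ as a vector of ℝ³. -/
def D3 (φ : E2 × ℝ → E3) (x : E2 × ℝ) : E3 :=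
  fun i => fderiv ℝ φ x ((0 : E2), (1 : ℝ)) i

/-- A representative of a W^{1,p}(S;ℝ³) map: differentiable on S with the map and
its gradient in L^p(S). -/
def SobOn (p : ℝ) (φ : E2 × ℝ → E3) (S : Set (E2 × ℝ)) : Prop :=
  (∀ x ∈ S, DifferentiableAt ℝ φ x) ∧
  MemLp φ (ENNReal.ofReal p) (volume.restrict S) ∧
  MemLp (fun x => fderiv ℝ φ x) (ENNReal.ofReal p) (volume.restrict S)

/-- Q'-periodicity in the in-plane variables. -/
def QPeriodic (φ : E2 × ℝ → E3) : Prop :=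
  ∀ (x : E2 × ℝ) (k : Fin 2 → ℤ), φ (x.1 + fun j => (k j : ℝ), x.2) = φ x

/-- Values attainable in the infimum defining Q*W. -/
def QstarSet (QW : ℝ → M33 → ℝ) (p : ℝ) (Fb : M32) (z : E3) : Set ℝ :=
  {c | ∃ L : ℝ, 0 < L ∧ ∃ φ : E2 × ℝ → E3, SobOn p φ stripset ∧ QPeriodic φ ∧
    (L / 2) • (∫ x in stripset, D3 φ x) = z ∧
    c = (1 / 2) * ∫ x in stripset, QW x.2 (cols (Fb + Dalpha φ x) (L • D3 φ x))}

/-- Q*W(F̄|z): infimum over L > 0 and Q'-periodic φ ∈ W^{1,p} with prescribed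
average (L/2)∫ D₃φ = z of the scaled energy. -/
def Qstar (QW : ℝ → M33 → ℝ) (p : ℝ) (Fb : M32) (z : E3) : ℝ :=
  sInf (QstarSet QW p Fb z)

/-- The open unit cube (0,1)³. -/
def cube3 : Set E3 := {y | ∀ i, y i ∈ Set.Ioo (0 : ℝ) 1}

/-- A representative of W^{1,p}₀((0,1)³;ℝ³), extended by zero. -/
def SobCube0 (p : ℝ) (φ : E3 → E3) : Prop :=
  (∀ y ∈ cube3, DifferentiableAt ℝ φ y) ∧ (∀ y ∉ cube3, φ y = 0) ∧
  MemLp φ (ENNReal.ofReal p) (volume.restrict cube3) ∧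
  MemLp (fun y => fderiv ℝ φ y) (ENNReal.ofReal p) (volume.restrict cube3)

/-- The quasiconvexification (quasiconvex envelope) in the matrix variable. -/
def qcEnv (W : M33 → ℝ) (p : ℝ) (F : M33) : ℝ :=
  sInf {c | ∃ φ : E3 → E3, SobCube0 p φ ∧
    c = ∫ y in cube3, W (F + Matrix.of fun i j => fderiv ℝ φ y (Pi.single j (1 : ℝ)) i)}



-- norm identifications
def eucl33 (F : M33) : EuclideanSpace ℝ (Fin 3 × Fin 3) :=
  WithLp.toLp 2 (fun ij : Fin 3 × Fin 3 => F ij.1 ij.2)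
def eucl32 (F : M32) : EuclideanSpace ℝ (Fin 3 × Fin 2) :=
  WithLp.toLp 2 (fun ij : Fin 3 × Fin 2 => F ij.1 ij.2)
def eucl3 (z : E3) : EuclideanSpace ℝ (Fin 3) := WithLp.toLp 2 z

lemma mnorm33_eq (F : M33) : mnorm33 F = ‖eucl33 F‖ := by
  rw [EuclideanSpace.norm_eq, mnorm33, Fintype.sum_prod_type]
  simp [eucl33, Real.norm_eq_abs, sq_abs]

lemma mnorm32_eq (F : M32) : mnorm32 F = ‖eucl32 F‖ := by
  rw [EuclideanSpace.norm_eq, mnorm32, Fintype.sum_prod_type]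
  simp [eucl32, Real.norm_eq_abs, sq_abs]

lemma vnorm3_eq (z : E3) : vnorm3 z = ‖eucl3 z‖ := by
  rw [EuclideanSpace.norm_eq, vnorm3]
  simp [eucl3, Real.norm_eq_abs, sq_abs]

lemma eucl33_add (A B : M33) : eucl33 (A + B) = eucl33 A + eucl33 B := rfl

lemma mnorm33_nonneg (F : M33) : 0 ≤ mnorm33 F := Real.sqrt_nonneg _
lemma mnorm32_nonneg (F : M32) : 0 ≤ mnorm32 F := Real.sqrt_nonneg _
lemma vnorm3_nonneg (z : E3) : 0 ≤ vnorm3 z := Real.sqrt_nonneg _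

lemma mnorm33_triangle (A B : M33) : mnorm33 (A + B) ≤ mnorm33 A + mnorm33 B := by
  rw [mnorm33_eq, mnorm33_eq, mnorm33_eq, eucl33_add]
  exact norm_add_le _ _

lemma mnorm33_le_bound (F : M33) (C : ℝ) (hC : 0 ≤ C) (h : ∀ i j, |F i j| ≤ C) :
    mnorm33 F ≤ 3 * C := by
  have h1 : ∀ i j, F i j ^ 2 ≤ C ^ 2 := fun i j => by
    have := h i j; nlinarith [abs_nonneg (F i j), sq_abs (F i j)]
  have : (∑ i, ∑ j, F i j ^ 2) ≤ (3*C)^2 := by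
    calc (∑ i, ∑ j : Fin 3, F i j ^ 2) ≤ ∑ _i : Fin 3, ∑ _j : Fin 3, C ^ 2 :=
          Finset.sum_le_sum fun i _ => Finset.sum_le_sum fun j _ => h1 i j
      _ = 9 * C^2 := by simp [Finset.sum_const]; ring
      _ ≤ (3*C)^2 := by nlinarith
  calc mnorm33 F ≤ Real.sqrt ((3*C)^2) := Real.sqrt_le_sqrt this
    _ = 3*C := Real.sqrt_sq (by positivity)

lemma mnorm32_le_bound (F : M32) (C : ℝ) (hC : 0 ≤ C) (h : ∀ i j, |F i j| ≤ C) :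
    mnorm32 F ≤ 3 * C := by
  have h1 : ∀ i j, F i j ^ 2 ≤ C ^ 2 := fun i j => by
    have := h i j; nlinarith [abs_nonneg (F i j), sq_abs (F i j)]
  have : (∑ i, ∑ j, F i j ^ 2) ≤ (3*C)^2 := by
    calc (∑ i : Fin 3, ∑ j : Fin 2, F i j ^ 2) ≤ ∑ _i : Fin 3, ∑ _j : Fin 2, C ^ 2 :=
          Finset.sum_le_sum fun i _ => Finset.sum_le_sum fun j _ => h1 i j
      _ = 6 * C^2 := by simp [Finset.sum_const]; ring
      _ ≤ (3*C)^2 := by nlinarith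
  calc mnorm32 F ≤ Real.sqrt ((3*C)^2) := Real.sqrt_le_sqrt this
    _ = 3*C := Real.sqrt_sq (by positivity)

lemma vnorm3_le_bound (z : E3) (C : ℝ) (hC : 0 ≤ C) (h : ∀ i, |z i| ≤ C) :
    vnorm3 z ≤ 3 * C := by
  have h1 : ∀ i, z i ^ 2 ≤ C ^ 2 := fun i => by
    have := h i; nlinarith [abs_nonneg (z i), sq_abs (z i)]
  have : (∑ i, z i ^ 2) ≤ (3*C)^2 := by
    calc (∑ i : Fin 3, z i ^ 2) ≤ ∑ _i : Fin 3, C ^ 2 :=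
          Finset.sum_le_sum fun i _ => h1 i
      _ = 3 * C^2 := by simp [Finset.sum_const]
      _ ≤ (3*C)^2 := by nlinarith
  calc vnorm3 z ≤ Real.sqrt ((3*C)^2) := Real.sqrt_le_sqrt this
    _ = 3*C := Real.sqrt_sq (by positivity)

lemma cols_add (A B : M32) (u v : E3) : cols (A + B) (u + v) = cols A u + cols B v := by
  ext i j
  by_cases hj : (j : ℕ) ≤ 1 <;> simp [cols, hj, Matrix.add_apply]

lemma cols_split (A : M32) (u : E3) : cols A u = cols A 0 + cols 0 u := by
  simpa using cols_add A 0 0 u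

lemma mnorm33_cols_A (A : M32) : mnorm33 (cols A 0) = mnorm32 A := by
  rw [mnorm33, mnorm32]
  congr 1
  refine Finset.sum_congr rfl fun i _ => ?_
  rw [Fin.sum_univ_three, Fin.sum_univ_two]
  norm_num [cols]

lemma mnorm33_cols_z (u : E3) : mnorm33 (cols 0 u) = vnorm3 u := by
  rw [mnorm33, vnorm3]
  congr 1
  rw [Finset.sum_comm]
  rw [Fin.sum_univ_three]
  norm_num [cols]

lemma mnorm33_cols_le (A : M32) (u : E3) : mnorm33 (cols A u) ≤ mnorm32 A + vnorm3 u := by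
  rw [cols_split]
  calc mnorm33 _ ≤ mnorm33 (cols A 0) + mnorm33 (cols 0 u) := mnorm33_triangle _ _
    _ = _ := by rw [mnorm33_cols_A, mnorm33_cols_z]

-- rpow lemmas
lemma rpow_pm1_le {s p : ℝ} (hs : 0 ≤ s) (hp : 1 ≤ p) : s ^ (p-1) ≤ 1 + s ^ p := by
  rcases le_total s 1 with h | h
  · have : s ^ (p-1) ≤ 1 := Real.rpow_le_one hs h (by linarith)
    have : (0:ℝ) ≤ s ^ p := Real.rpow_nonneg hs p
    linarith [Real.rpow_le_one hs h (show (0:ℝ) ≤ p-1 by linarith)]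
  · have h2 : s ^ (p-1) ≤ s ^ p := Real.rpow_le_rpow_of_exponent_le h (by linarith)
    linarith

lemma add_rpow_le {a b p : ℝ} (ha : 0 ≤ a) (hb : 0 ≤ b) (hp : 0 ≤ p) :
    (a + b) ^ p ≤ 2 ^ p * (a ^ p + b ^ p) := by
  rcases le_total a b with h | h
  · calc (a+b)^p ≤ (2*b)^p := Real.rpow_le_rpow (by linarith) (by linarith) hp
      _ = 2^p * b^p := Real.mul_rpow (by norm_num) hb
      _ ≤ 2^p * (a^p + b^p) := by
          have : (0:ℝ) ≤ a ^ p := Real.rpow_nonneg ha p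
          have h2 : (0:ℝ) ≤ (2:ℝ)^p := Real.rpow_nonneg (by norm_num) p
          nlinarith
  · calc (a+b)^p ≤ (2*a)^p := Real.rpow_le_rpow (by linarith) (by linarith) hp
      _ = 2^p * a^p := Real.mul_rpow (by norm_num) ha
      _ ≤ 2^p * (a^p + b^p) := by
          have : (0:ℝ) ≤ b ^ p := Real.rpow_nonneg hb p
          have h2 : (0:ℝ) ≤ (2:ℝ)^p := Real.rpow_nonneg (by norm_num) p
          nlinarith

-- stripset facts
def stripset' : Set (E2 × ℝ) :=
  {x | (∀ j, x.1 j ∈ Set.Ioo (0 : ℝ) 1) ∧ x.2 ∈ Set.Ioo (-1 : ℝ) 1}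

lemma stripset'_eq : stripset' =
    (Set.pi Set.univ fun _ : Fin 2 => Set.Ioo (0:ℝ) 1) ×ˢ Set.Ioo (-1:ℝ) 1 := by
  ext x; simp [stripset', Set.mem_pi]

lemma measurableSet_stripset' : MeasurableSet stripset' := by
  rw [stripset'_eq]
  exact (MeasurableSet.univ_pi fun _ => measurableSet_Ioo).prod measurableSet_Ioo

lemma volume_stripset' : volume stripset' = ENNReal.ofReal 2 := by
  rw [stripset'_eq, Measure.volume_eq_prod, Measure.prod_prod, volume_pi_pi]
  simp [Real.volume_Ioo]
  norm_num

lemma volume_stripset'_toReal : (volume stripset').toReal = 2 := by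
  rw [volume_stripset']; simp

lemma isFiniteMeasure_stripset' : IsFiniteMeasure (volume.restrict stripset') :=
  ⟨by rw [Measure.restrict_apply_univ, volume_stripset']; exact ENNReal.ofReal_lt_top⟩

section QWfacts
variable {p β β' : ℝ} {QW : ℝ → M33 → ℝ}

lemma QW_nonneg (hβ' : 0 < β')
    (hgrowth : ∀ t F, β' * mnorm33 F ^ p ≤ QW t F ∧ QW t F ≤ β * (1 + mnorm33 F ^ p))
    (t : ℝ) (F : M33) : 0 ≤ QW t F :=
  le_trans (mul_nonneg hβ'.le (Real.rpow_nonneg (mnorm33_nonneg F) p)) (hgrowth t F).1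

lemma mnorm33_sub_tendsto {Fk : ℕ → M33} {F : M33}
    (h : Tendsto (fun k => mnorm33 (Fk k - F)) atTop (nhds 0)) :
    Tendsto (fun k => mnorm33 (Fk k)) atTop (nhds (mnorm33 F)) := by
  have hb : ∀ k, mnorm33 (Fk k) ≤ mnorm33 F + mnorm33 (Fk k - F) := by
    intro k
    have := mnorm33_triangle F (Fk k - F)
    simpa [add_comm] using this
  have hb2 : ∀ k, mnorm33 F - mnorm33 (Fk k - F) ≤ mnorm33 (Fk k) := by
    intro k
    have h1 : mnorm33 ((Fk k - F) + Fk k) ≤ mnorm33 (Fk k - F) + mnorm33 (Fk k) := by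
      simpa using mnorm33_triangle (Fk k - F) (Fk k)
    have h2 : mnorm33 ((Fk k - F) + Fk k) = mnorm33 (F + (2 : ℝ) • (Fk k - F)) := by
      congr 1; ext i j
      simp [Matrix.sub_apply, Matrix.add_apply, Matrix.smul_apply]
      ring
    -- simpler: F = Fk k - (Fk k - F)
    have h3 : mnorm33 F ≤ mnorm33 (Fk k) + mnorm33 (Fk k - F) := by
      have h4 : mnorm33 (Fk k + (F - Fk k)) ≤ mnorm33 (Fk k) + mnorm33 (F - Fk k) :=
        mnorm33_triangle _ _
      have h5 : Fk k + (F - Fk k) = F := by abel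
      have h6 : mnorm33 (F - Fk k) = mnorm33 (Fk k - F) := by
        rw [mnorm33, mnorm33]; congr 1
        refine Finset.sum_congr rfl fun i _ => Finset.sum_congr rfl fun j _ => ?_
        simp [Matrix.sub_apply]; ring
      rw [h5, h6] at h4; exact h4
    linarith
  have h0 : Tendsto (fun k => mnorm33 F + mnorm33 (Fk k - F)) atTop (nhds (mnorm33 F)) := by
    simpa using (tendsto_const_nhds (x := mnorm33 F)).add h
  have h0' : Tendsto (fun k => mnorm33 F - mnorm33 (Fk k - F)) atTop (nhds (mnorm33 F)) := by
    simpa using (tendsto_const_nhds (x := mnorm33 F)).sub h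
  exact tendsto_of_tendsto_of_tendsto_of_le_of_le h0' h0 hb2 hb

lemma QW_cont (hp : 1 < p) (hβ : 0 < β)
    (hlip : ∀ t F₁ F₂, |QW t F₁ - QW t F₂| ≤
        β * (1 + mnorm33 F₁ ^ (p - 1) + mnorm33 F₂ ^ (p - 1)) * mnorm33 (F₁ - F₂))
    (t : ℝ) {Fk : ℕ → M33} {F : M33}
    (h : Tendsto (fun k => mnorm33 (Fk k - F)) atTop (nhds 0)) :
    Tendsto (fun k => QW t (Fk k)) atTop (nhds (QW t F)) := by
  have hn : Tendsto (fun k => mnorm33 (Fk k)) atTop (nhds (mnorm33 F)) := mnorm33_sub_tendsto h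
  have hpm : Tendsto (fun k => mnorm33 (Fk k) ^ (p-1)) atTop (nhds (mnorm33 F ^ (p-1))) := by
    have hc : ContinuousAt (fun s : ℝ => s ^ (p-1)) (mnorm33 F) :=
      Real.continuousAt_rpow_const _ _ (Or.inr (by linarith))
    exact hc.tendsto.comp hn
  have hbound : Tendsto (fun k =>
      β * (1 + mnorm33 (Fk k) ^ (p-1) + mnorm33 F ^ (p-1)) * mnorm33 (Fk k - F)) atTop (nhds 0) := by
    have : Tendsto (fun k => β * (1 + mnorm33 (Fk k) ^ (p-1) + mnorm33 F ^ (p-1))) atTop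
        (nhds (β * (1 + mnorm33 F ^ (p-1) + mnorm33 F ^ (p-1)))) := by
      exact (tendsto_const_nhds.mul (((tendsto_const_nhds (x := (1:ℝ))).add hpm).add tendsto_const_nhds))
    simpa using this.mul h
  have hsq : Tendsto (fun k => |QW t (Fk k) - QW t F|) atTop (nhds 0) := by
    refine squeeze_zero (fun k => abs_nonneg _) (fun k => hlip t (Fk k) F) hbound
  have := tendsto_sub_nhds_zero_iff.mp ((tendsto_zero_iff_abs_tendsto_zero _).mpr hsq)
  exact this

end QWfacts

section measQW
variable {p β β' : ℝ} {QW : ℝ → M33 → ℝ}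

instance : MeasurableSpace M33 := show MeasurableSpace (Fin 3 → Fin 3 → ℝ) from inferInstance
instance : MeasurableSingletonClass M33 :=
  show MeasurableSingletonClass (Fin 3 → Fin 3 → ℝ) from inferInstance
instance : BorelSpace M33 := show BorelSpace (Fin 3 → Fin 3 → ℝ) from inferInstance

def mapprox (k : ℕ) (F : M33) : M33 :=
  Matrix.of fun i j => (⌊F i j * (k+1)⌋ : ℝ) / (k+1)

lemma mapprox_measurable (k : ℕ) : Measurable (mapprox k) := by
  refine measurable_pi_lambda _ fun i => measurable_pi_lambda _ fun j => ?_
  have h1 : Measurable fun F : M33 => F i j :=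
    (measurable_pi_apply j).comp (measurable_pi_apply i)
  have hfl : Measurable fun F : M33 => ⌊F i j * ((k:ℝ)+1)⌋ :=
    Int.measurable_floor.comp (h1.mul_const _)
  have hcast : Measurable fun n : ℤ => (n : ℝ) := measurable_from_top
  exact (hcast.comp hfl).div_const _

lemma mapprox_countable_range (k : ℕ) : (Set.range (mapprox k)).Countable := by
  have : Set.range (mapprox k) ⊆
      {F : M33 | ∀ i, (fun j => F i j) ∈ {g : Fin 3 → ℝ | ∀ j, g j ∈ Set.range (fun n : ℤ => (n:ℝ)/(k+1))}} := by
    rintro F ⟨G, rfl⟩ i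
    intro j
    exact ⟨⌊G i j * (k+1)⌋, rfl⟩
  refine Set.Countable.mono this ?_
  refine Set.countable_pi fun i => Set.countable_pi fun j => Set.countable_range _

lemma mapprox_dist (k : ℕ) (F : M33) (i j : Fin 3) :
    |mapprox k F i j - F i j| ≤ 1/(k+1) := by
  have hk : (0:ℝ) < (k:ℝ) + 1 := by positivity
  have h1 := Int.floor_le (F i j * (k+1))
  have h2 := Int.lt_floor_add_one (F i j * (k+1))
  have hm : mapprox k F i j = (⌊F i j * ((k:ℝ)+1)⌋ : ℝ)/((k:ℝ)+1) := rfl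
  have key : mapprox k F i j - F i j
      = ((⌊F i j * ((k:ℝ)+1)⌋ : ℝ) - F i j * ((k:ℝ)+1))/((k:ℝ)+1) := by
    rw [hm]; field_simp
  rw [key, abs_div, abs_of_pos hk]
  gcongr
  rw [abs_le]; constructor <;> linarith

lemma mapprox_tendsto (F : M33) :
    Tendsto (fun k => mnorm33 (mapprox k F - F)) atTop (nhds 0) := by
  have hb : ∀ k, mnorm33 (mapprox k F - F) ≤ 3 * (1/(k+1)) := by
    intro k
    refine mnorm33_le_bound _ _ (by positivity) fun i j => ?_
    simpa [Matrix.sub_apply] using mapprox_dist k F i j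
  have h0 : ∀ k, 0 ≤ mnorm33 (mapprox k F - F) := fun k => mnorm33_nonneg _
  have hlim : Tendsto (fun k : ℕ => 3 * (1/((k:ℝ)+1))) atTop (nhds 0) := by
    simpa using (tendsto_one_div_add_atTop_nhds_zero_nat).const_mul (3:ℝ)
  exact squeeze_zero h0 hb hlim

lemma measQW_countable {g : E2 × ℝ → M33}
    (hmeas : ∀ F, Measurable fun t => QW t F)
    (hg : Measurable g) (hcount : (Set.range g).Countable) :
    Measurable fun x => QW x.2 (g x) := by
  intro s hs
  have key : (fun x => QW x.2 (g x)) ⁻¹' s =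
      ⋃ v ∈ Set.range g, (g ⁻¹' {v}) ∩ {x | QW x.2 v ∈ s} := by
    ext x
    simp only [Set.mem_preimage, Set.mem_iUnion, Set.mem_inter_iff, Set.mem_setOf_eq,
      Set.mem_singleton_iff]
    constructor
    · intro hx; exact ⟨g x, ⟨x, rfl⟩, rfl, hx⟩
    · rintro ⟨v, _, rfl, hx⟩; exact hx
  rw [key]
  refine MeasurableSet.biUnion hcount fun v _ => (hg (measurableSet_singleton v)).inter ?_
  exact (hmeas v).comp measurable_snd hs

lemma measQW (hp : 1 < p) (hβ : 0 < β)
    (hmeas : ∀ F, Measurable fun t => QW t F)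
    (hlip : ∀ t F₁ F₂, |QW t F₁ - QW t F₂| ≤
        β * (1 + mnorm33 F₁ ^ (p - 1) + mnorm33 F₂ ^ (p - 1)) * mnorm33 (F₁ - F₂))
    {g : E2 × ℝ → M33} (hg : Measurable g) :
    Measurable fun x => QW x.2 (g x) := by
  have hk : ∀ k : ℕ, Measurable fun x => QW x.2 (mapprox k (g x)) := by
    intro k
    have : (Set.range (mapprox k ∘ g)).Countable :=
      Set.Countable.mono (Set.range_comp_subset_range g (mapprox k)) (mapprox_countable_range k)
    exact measQW_countable hmeas ((mapprox_measurable k).comp hg) this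
  refine measurable_of_tendsto_metrizable hk ?_
  rw [tendsto_pi_nhds]
  intro x
  exact QW_cont hp hβ hlip x.2 (mapprox_tendsto (g x))

end measQW


lemma stripset_eq' : stripset = stripset' := rfl
lemma measurableSet_stripset : MeasurableSet stripset := measurableSet_stripset'
lemma volume_stripset_toReal : (volume stripset).toReal = 2 := volume_stripset'_toReal
lemma isFiniteMeasure_stripset : IsFiniteMeasure (volume.restrict stripset) :=
  isFiniteMeasure_stripset'

instance : MeasurableSpace M32 := show MeasurableSpace (Fin 3 → Fin 2 → ℝ) from inferInstance

section sob
variable {p : ℝ} {φ : E2 × ℝ → E3}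

lemma measurable_Dalpha : Measurable fun x => Dalpha φ x := by
  refine measurable_pi_lambda _ fun i => measurable_pi_lambda _ fun j => ?_
  have h1 : Continuous fun T : (E2 × ℝ) →L[ℝ] E3 => T (Pi.single j (1:ℝ), 0) i :=
    (continuous_apply i).comp (ContinuousLinearMap.apply ℝ E3 ((Pi.single j (1:ℝ), 0) : E2 × ℝ)).continuous
  exact h1.measurable.comp (measurable_fderiv ℝ φ)

lemma measurable_D3 : Measurable fun x => D3 φ x := by
  refine measurable_pi_lambda _ fun i => ?_
  have h1 : Continuous fun T : (E2 × ℝ) →L[ℝ] E3 => T ((0 : E2), (1:ℝ)) i :=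
    (continuous_apply i).comp (ContinuousLinearMap.apply ℝ E3 (((0 : E2), (1:ℝ)) : E2 × ℝ)).continuous
  exact h1.measurable.comp (measurable_fderiv ℝ φ)

lemma measurable_colsmap (G : M32) (u : E3) (L : ℝ) :
    Measurable fun x => cols (G + Dalpha φ x) (u + L • D3 φ x) := by
  refine measurable_pi_lambda _ fun i => measurable_pi_lambda _ fun j => ?_
  by_cases hj : (j : ℕ) < 2
  · simp only [cols, Matrix.of_apply, hj, dif_pos]
    have : Measurable fun x => Dalpha φ x i ⟨(j:ℕ), hj⟩ :=
      (measurable_pi_apply _).comp ((measurable_pi_apply i).comp measurable_Dalpha)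
    simpa [Matrix.add_apply] using this.const_add (G i ⟨(j:ℕ), hj⟩)
  · simp only [cols, Matrix.of_apply, hj, dif_neg, not_false_iff]
    have : Measurable fun x => D3 φ x i :=
      (measurable_pi_apply i).comp measurable_D3
    have h2 : Measurable fun x => u i + L * D3 φ x i := (this.const_mul L).const_add (u i)
    simpa [Pi.add_apply, Pi.smul_apply, smul_eq_mul] using h2

lemma norm_single_le (j : Fin 2) : ‖(Pi.single j (1:ℝ) : E2)‖ ≤ 1 := by
  refine (pi_norm_le_iff_of_nonneg zero_le_one).mpr fun i => ?_
  rcases eq_or_ne i j with rfl | h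
  · simp
  · simp [Pi.single_eq_of_ne h]

lemma abs_Dalpha_le (x : E2 × ℝ) (i : Fin 3) (j : Fin 2) :
    |Dalpha φ x i j| ≤ ‖fderiv ℝ φ x‖ := by
  have h1 : |Dalpha φ x i j| ≤ ‖fderiv ℝ φ x (Pi.single j (1:ℝ), 0)‖ := by
    simpa [Dalpha, Real.norm_eq_abs] using
      norm_le_pi_norm (fderiv ℝ φ x ((Pi.single j (1:ℝ), 0) : E2 × ℝ)) i
  refine h1.trans ?_
  calc ‖fderiv ℝ φ x ((Pi.single j (1:ℝ), 0) : E2 × ℝ)‖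
      ≤ ‖fderiv ℝ φ x‖ * ‖((Pi.single j (1:ℝ), 0) : E2 × ℝ)‖ := (fderiv ℝ φ x).le_opNorm _
    _ ≤ ‖fderiv ℝ φ x‖ * 1 := by
        refine mul_le_mul_of_nonneg_left ?_ (norm_nonneg _)
        rw [Prod.norm_def]
        simp only [norm_zero]
        exact max_le (norm_single_le j) zero_le_one
    _ = ‖fderiv ℝ φ x‖ := mul_one _

lemma abs_D3_le (x : E2 × ℝ) (i : Fin 3) : |D3 φ x i| ≤ ‖fderiv ℝ φ x‖ := by
  have h1 : |D3 φ x i| ≤ ‖fderiv ℝ φ x (((0 : E2), (1:ℝ)) : E2 × ℝ)‖ := by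
    simpa [D3, Real.norm_eq_abs] using
      norm_le_pi_norm (fderiv ℝ φ x (((0 : E2), (1:ℝ)) : E2 × ℝ)) i
  refine h1.trans ?_
  calc ‖fderiv ℝ φ x (((0 : E2), (1:ℝ)) : E2 × ℝ)‖
      ≤ ‖fderiv ℝ φ x‖ * ‖(((0 : E2), (1:ℝ)) : E2 × ℝ)‖ := (fderiv ℝ φ x).le_opNorm _
    _ ≤ ‖fderiv ℝ φ x‖ * 1 := by
        refine mul_le_mul_of_nonneg_left ?_ (norm_nonneg _)
        rw [Prod.norm_def]
        simp
    _ = ‖fderiv ℝ φ x‖ := mul_one _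

lemma mnorm33_colsmap_le (G : M32) (u : E3) (L : ℝ) (x : E2 × ℝ) :
    mnorm33 (cols (G + Dalpha φ x) (u + L • D3 φ x))
      ≤ (mnorm32 G + vnorm3 u) + (3 + 3 * |L|) * ‖fderiv ℝ φ x‖ := by
  have key : cols (G + Dalpha φ x) (u + L • D3 φ x)
      = cols G u + cols (Dalpha φ x) (L • D3 φ x) := cols_add _ _ _ _
  rw [key]
  refine (mnorm33_triangle _ _).trans ?_
  have h1 : mnorm33 (cols G u) ≤ mnorm32 G + vnorm3 u := mnorm33_cols_le _ _
  have h2 : mnorm33 (cols (Dalpha φ x) (L • D3 φ x)) ≤ (3 + 3 * |L|) * ‖fderiv ℝ φ x‖ := by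
    refine (mnorm33_cols_le _ _).trans ?_
    have h3 : mnorm32 (Dalpha φ x) ≤ 3 * ‖fderiv ℝ φ x‖ :=
      mnorm32_le_bound _ _ (norm_nonneg _) (abs_Dalpha_le x)
    have h4 : vnorm3 (L • D3 φ x) ≤ 3 * (|L| * ‖fderiv ℝ φ x‖) := by
      refine vnorm3_le_bound _ _ (by positivity) fun i => ?_
      have := abs_D3_le (φ := φ) x i
      calc |(L • D3 φ x) i| = |L| * |D3 φ x i| := by
            simp [Pi.smul_apply, smul_eq_mul, abs_mul]
        _ ≤ |L| * ‖fderiv ℝ φ x‖ := mul_le_mul_of_nonneg_left this (abs_nonneg L)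
    calc mnorm32 (Dalpha φ x) + vnorm3 (L • D3 φ x)
        ≤ 3 * ‖fderiv ℝ φ x‖ + 3 * (|L| * ‖fderiv ℝ φ x‖) := add_le_add h3 h4
      _ = (3 + 3 * |L|) * ‖fderiv ℝ φ x‖ := by ring
  linarith

end sob

lemma continuous_mnorm33 : Continuous mnorm33 := by
  unfold mnorm33
  exact Real.continuous_sqrt.comp <|
    continuous_finset_sum _ fun i _ => continuous_finset_sum _ fun j _ =>
      ((continuous_apply j).comp (continuous_apply (A := fun _ : Fin 3 => Fin 3 → ℝ) i)).pow 2

section integ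
variable {p β β' : ℝ} {QW : ℝ → M33 → ℝ} {φ : E2 × ℝ → E3}

lemma integrable_fderiv_rpow (hp : 1 < p) (hsob : SobOn p φ stripset) :
    Integrable (fun x => ‖fderiv ℝ φ x‖ ^ p) (volume.restrict stripset) := by
  have h := hsob.2.2.integrable_norm_rpow
    (by simp [ENNReal.ofReal_eq_zero]; linarith) ENNReal.ofReal_ne_top
  simpa [ENNReal.toReal_ofReal (show (0:ℝ) ≤ p by linarith)] using h

lemma integrable_colsmap_rpow (hp : 1 < p) (hsob : SobOn p φ stripset) (G : M32) (u : E3) (L : ℝ) :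
    Integrable (fun x => mnorm33 (cols (G + Dalpha φ x) (u + L • D3 φ x)) ^ p)
      (volume.restrict stripset) := by
  haveI := isFiniteMeasure_stripset
  set C := mnorm32 G + vnorm3 u with hC
  set B := 3 + 3 * |L| with hB
  have hC0 : 0 ≤ C := add_nonneg (mnorm32_nonneg _) (vnorm3_nonneg _)
  have hB0 : 0 ≤ B := by positivity
  have hg : Integrable (fun x => 2^p * (C^p + B^p * ‖fderiv ℝ φ x‖^p))
      (volume.restrict stripset) :=
    ((integrable_const (C^p)).add ((integrable_fderiv_rpow hp hsob).const_mul (B^p))).const_mul (2^p)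
  refine hg.mono' ?_ ?_
  · have hm : Measurable fun x => mnorm33 (cols (G + Dalpha φ x) (u + L • D3 φ x)) ^ p := by
      have h1 : Measurable fun x => mnorm33 (cols (G + Dalpha φ x) (u + L • D3 φ x)) :=
        continuous_mnorm33.measurable.comp (measurable_colsmap G u L)
      exact ((Real.continuous_rpow_const (by linarith : (0:ℝ) ≤ p)).measurable).comp h1
    exact hm.aestronglyMeasurable
  · refine Filter.Eventually.of_forall fun x => ?_
    have hb := mnorm33_colsmap_le (φ := φ) G u L x
    have h0 : 0 ≤ mnorm33 (cols (G + Dalpha φ x) (u + L • D3 φ x)) := mnorm33_nonneg _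
    rw [Real.norm_eq_abs, abs_of_nonneg (Real.rpow_nonneg h0 p)]
    calc mnorm33 (cols (G + Dalpha φ x) (u + L • D3 φ x)) ^ p
        ≤ (C + B * ‖fderiv ℝ φ x‖) ^ p :=
          Real.rpow_le_rpow h0 hb (by linarith)
      _ ≤ 2^p * (C^p + (B * ‖fderiv ℝ φ x‖)^p) :=
          add_rpow_le hC0 (by positivity) (by linarith)
      _ = 2^p * (C^p + B^p * ‖fderiv ℝ φ x‖^p) := by
          rw [Real.mul_rpow hB0 (norm_nonneg _)]

lemma integrable_QW_colsmap (hp : 1 < p) (hβ : 0 < β) (hβ' : 0 < β')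
    (hmeas : ∀ F, Measurable fun t => QW t F)
    (hgrowth : ∀ t F, β' * mnorm33 F ^ p ≤ QW t F ∧ QW t F ≤ β * (1 + mnorm33 F ^ p))
    (hlip : ∀ t F₁ F₂, |QW t F₁ - QW t F₂| ≤
        β * (1 + mnorm33 F₁ ^ (p - 1) + mnorm33 F₂ ^ (p - 1)) * mnorm33 (F₁ - F₂))
    (hsob : SobOn p φ stripset) (G : M32) (u : E3) (L : ℝ) :
    Integrable (fun x => QW x.2 (cols (G + Dalpha φ x) (u + L • D3 φ x)))
      (volume.restrict stripset) := by
  haveI := isFiniteMeasure_stripset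
  have hg : Integrable
      (fun x => β * (1 + mnorm33 (cols (G + Dalpha φ x) (u + L • D3 φ x)) ^ p))
      (volume.restrict stripset) :=
    ((integrable_const 1).add (integrable_colsmap_rpow hp hsob G u L)).const_mul β
  refine hg.mono' ?_ ?_
  · exact (measQW hp hβ hmeas hlip (measurable_colsmap G u L)).aestronglyMeasurable
  · refine Filter.Eventually.of_forall fun x => ?_
    rw [Real.norm_eq_abs, abs_of_nonneg (QW_nonneg hβ' hgrowth _ _)]
    exact (hgrowth _ _).2

lemma integrableOn_D3 (hp : 1 < p) (hsob : SobOn p φ stripset) :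
    Integrable (D3 φ) (volume.restrict stripset) := by
  haveI := isFiniteMeasure_stripset
  have hmem : MemLp (D3 φ) (ENNReal.ofReal p) (volume.restrict stripset) := by
    refine MemLp.of_le_mul (c := 1) hsob.2.2 measurable_D3.aestronglyMeasurable ?_
    refine Filter.Eventually.of_forall fun x => ?_
    refine (pi_norm_le_iff_of_nonneg (by positivity)).mpr fun i => ?_
    rw [Real.norm_eq_abs]
    simpa [one_mul] using abs_D3_le (φ := φ) x i

  exact hmem.integrable (by simpa using ENNReal.one_le_ofReal.mpr (le_of_lt hp))

end integ

-- linear witness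
def linA (w : E3) : (E2 × ℝ) →L[ℝ] E3 := (ContinuousLinearMap.snd ℝ E2 ℝ).smulRight w
def linφ (w : E3) : E2 × ℝ → E3 := fun x => x.2 • w

lemma linφ_eq (w : E3) : linφ w = ⇑(linA w) := by
  funext x; simp [linφ, linA]

lemma fderiv_linφ (w : E3) (x : E2 × ℝ) : fderiv ℝ (linφ w) x = linA w := by
  rw [linφ_eq]; exact (linA w).fderiv

lemma D3_linφ (w : E3) (x : E2 × ℝ) : D3 (linφ w) x = w := by
  funext i; rw [D3]; rw [fderiv_linφ]; simp [linA]

lemma Dalpha_linφ (w : E3) (x : E2 × ℝ) : Dalpha (linφ w) x = 0 := by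
  ext i j; rw [Dalpha]; simp only [Matrix.of_apply]; rw [fderiv_linφ]; simp [linA]

lemma sobOn_linφ {p : ℝ} (hp : 1 < p) (w : E3) : SobOn p (linφ w) stripset := by
  haveI := isFiniteMeasure_stripset
  refine ⟨fun x _ => by rw [linφ_eq]; exact (linA w).differentiableAt, ?_, ?_⟩
  · refine MemLp.of_bound ((linA w).continuous.aestronglyMeasurable (f := ⇑(linA w)) |>.congr ?_) ‖w‖ ?_
    · exact Filter.Eventually.of_forall fun x => by rw [linφ_eq]
    · rw [ae_restrict_iff' measurableSet_stripset]
      refine Filter.Eventually.of_forall fun x hx => ?_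
      have h2 : |x.2| ≤ 1 := by
        rcases hx.2 with ⟨h3, h4⟩; rw [abs_le]; exact ⟨by linarith, by linarith⟩
      calc ‖linφ w x‖ = |x.2| * ‖w‖ := by
            rw [linφ]; rw [norm_smul]; simp
        _ ≤ 1 * ‖w‖ := mul_le_mul_of_nonneg_right h2 (norm_nonneg w)
        _ = ‖w‖ := one_mul _
  · have : (fun x => fderiv ℝ (linφ w) x) = fun _ => linA w := funext fun x => fderiv_linφ w x
    rw [this]; exact memLp_const _

lemma QPeriodic_linφ (w : E3) : QPeriodic (linφ w) := fun x k => rfl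

section qsbasic
variable {p β β' : ℝ} {QW : ℝ → M33 → ℝ}

lemma mem_QstarSet_nonneg (hβ' : 0 < β')
    (hgrowth : ∀ t F, β' * mnorm33 F ^ p ≤ QW t F ∧ QW t F ≤ β * (1 + mnorm33 F ^ p))
    {Fb : M32} {z : E3} {c : ℝ} (hc : c ∈ QstarSet QW p Fb z) : 0 ≤ c := by
  obtain ⟨L, hL, φ, hsob, hper, hcon, rfl⟩ := hc
  have h1 : 0 ≤ ∫ x in stripset, QW x.2 (cols (Fb + Dalpha φ x) (L • D3 φ x)) :=
    integral_nonneg fun x => QW_nonneg hβ' hgrowth _ _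
  positivity

lemma bddBelow_QstarSet (hβ' : 0 < β')
    (hgrowth : ∀ t F, β' * mnorm33 F ^ p ≤ QW t F ∧ QW t F ≤ β * (1 + mnorm33 F ^ p))
    (Fb : M32) (z : E3) : BddBelow (QstarSet QW p Fb z) :=
  ⟨0, fun _ hc => mem_QstarSet_nonneg hβ' hgrowth hc⟩

lemma witness_mem (hp : 1 < p) (Fb : M32) (z : E3) :
    ((1:ℝ)/2) * (∫ x in stripset,
        QW x.2 (cols (Fb + Dalpha (linφ z) x) ((1:ℝ) • D3 (linφ z) x))) ∈
      QstarSet QW p Fb z := by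
  refine ⟨1, one_pos, linφ z, sobOn_linφ hp z, QPeriodic_linφ z, ?_, rfl⟩
  have h1 : (fun x => D3 (linφ z) x) = fun _ : E2 × ℝ => z := funext fun x => D3_linφ z x
  rw [h1, setIntegral_const, measureReal_def, volume_stripset_toReal]
  rw [smul_smul]; norm_num

lemma QstarSet_nonempty (hp : 1 < p) (Fb : M32) (z : E3) :
    (QstarSet QW p Fb z).Nonempty := ⟨_, witness_mem hp Fb z⟩

lemma Qstar_nonneg (hp : 1 < p) (hβ' : 0 < β')
    (hgrowth : ∀ t F, β' * mnorm33 F ^ p ≤ QW t F ∧ QW t F ≤ β * (1 + mnorm33 F ^ p))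
    (Fb : M32) (z : E3) : 0 ≤ Qstar QW p Fb z :=
  le_csInf (QstarSet_nonempty hp Fb z) fun _ hc => mem_QstarSet_nonneg hβ' hgrowth hc

lemma Qstar_le_bound (hp : 1 < p) (hβ : 0 < β) (hβ' : 0 < β')
    (hmeas : ∀ F, Measurable fun t => QW t F)
    (hgrowth : ∀ t F, β' * mnorm33 F ^ p ≤ QW t F ∧ QW t F ≤ β * (1 + mnorm33 F ^ p))
    (Fb : M32) (z : E3) :
    Qstar QW p Fb z ≤ β * (1 + mnorm33 (cols Fb z) ^ p) := by
  haveI := isFiniteMeasure_stripset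
  have hle : Qstar QW p Fb z ≤ ((1:ℝ)/2) * (∫ x in stripset,
      QW x.2 (cols (Fb + Dalpha (linφ z) x) ((1:ℝ) • D3 (linφ z) x))) :=
    csInf_le (bddBelow_QstarSet hβ' hgrowth Fb z) (witness_mem hp Fb z)
  have heq : (fun x : E2 × ℝ => QW x.2 (cols (Fb + Dalpha (linφ z) x) ((1:ℝ) • D3 (linφ z) x)))
      = fun x : E2 × ℝ => QW x.2 (cols Fb z) := by
    funext x; rw [Dalpha_linφ, D3_linφ, one_smul, add_zero]
  rw [heq] at hle
  have hint : Integrable (fun x : E2 × ℝ => QW x.2 (cols Fb z)) (volume.restrict stripset) := by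
    refine (integrable_const (β * (1 + mnorm33 (cols Fb z) ^ p))).mono' ?_ ?_
    · exact ((hmeas (cols Fb z)).comp measurable_snd).aestronglyMeasurable
    · refine Filter.Eventually.of_forall fun x => ?_
      rw [Real.norm_eq_abs, abs_of_nonneg (QW_nonneg hβ' hgrowth _ _)]
      exact (hgrowth _ _).2
  have hmono : (∫ x in stripset, QW x.2 (cols Fb z))
      ≤ ∫ _x in stripset, β * (1 + mnorm33 (cols Fb z) ^ p) := by
    refine integral_mono hint (integrable_const _) fun x => (hgrowth _ _).2
  rw [setIntegral_const, measureReal_def, volume_stripset_toReal, smul_eq_mul] at hmono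
  calc Qstar QW p Fb z ≤ ((1:ℝ)/2) * (∫ x in stripset, QW x.2 (cols Fb z)) := hle
    _ ≤ ((1:ℝ)/2) * (2 * (β * (1 + mnorm33 (cols Fb z) ^ p))) := by
        have h0 : 0 ≤ Qstar QW p Fb z := Qstar_nonneg hp hβ' hgrowth Fb z
        nlinarith [hle, hmono]
    _ = β * (1 + mnorm33 (cols Fb z) ^ p) := by ring

end qsbasic

section keylem
variable {p β β' : ℝ} {QW : ℝ → M33 → ℝ}

lemma key_lemma (hp : 1 < p) (hβ : 0 < β) (hβ' : 0 < β')
    (hmeas : ∀ F, Measurable fun t => QW t F)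
    (hgrowth : ∀ t F, β' * mnorm33 F ^ p ≤ QW t F ∧ QW t F ≤ β * (1 + mnorm33 F ^ p))
    (hlip : ∀ t F₁ F₂, |QW t F₁ - QW t F₂| ≤
        β * (1 + mnorm33 F₁ ^ (p - 1) + mnorm33 F₂ ^ (p - 1)) * mnorm33 (F₁ - F₂))
    (Fb Fb' : M32) (z z' : E3) {c : ℝ} (hc : c ∈ QstarSet QW p Fb z) :
    Qstar QW p Fb' z' ≤ c + (β/2) * mnorm33 (cols (Fb' - Fb) (z' - z)) *
      (6 + (1+2^p) * (2*c/β') + 2^(p+1) * mnorm33 (cols (Fb' - Fb) (z' - z)) ^ p) := by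
  haveI := isFiniteMeasure_stripset
  obtain ⟨L, hL, φ, hsob, hper, hcon, hceq⟩ := hc
  set Δ : M33 := cols (Fb' - Fb) (z' - z) with hΔdef
  set δ := mnorm33 Δ with hδdef
  have hδ0 : 0 ≤ δ := mnorm33_nonneg _
  set w : E3 := (L⁻¹) • (z' - z) with hwdef
  set φ' : E2 × ℝ → E3 := fun x => φ x + linφ w x with hφ'def
  have hLw : L • w = z' - z := by
    rw [hwdef, smul_smul, mul_inv_cancel₀ hL.ne', one_smul]
  have hdiffl : ∀ y : E2 × ℝ, DifferentiableAt ℝ (linφ w) y := fun y => by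
    rw [linφ_eq]; exact (linA w).differentiableAt
  have hfd : ∀ x ∈ stripset, fderiv ℝ φ' x = fderiv ℝ φ x + linA w := by
    intro x hx
    have h1 : fderiv ℝ (fun y => φ y + linφ w y) x
        = fderiv ℝ φ x + fderiv ℝ (linφ w) x := fderiv_add (hsob.1 x hx) (hdiffl x)
    rw [hφ'def, h1, fderiv_linφ]
  have hD3 : ∀ x ∈ stripset, D3 φ' x = D3 φ x + w := by
    intro x hx
    funext i
    simp only [D3, hfd x hx, ContinuousLinearMap.add_apply, Pi.add_apply]
    congr 1
    simp [linA]
  have hDα : ∀ x ∈ stripset, Dalpha φ' x = Dalpha φ x := by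
    intro x hx
    ext i j
    simp only [Dalpha, Matrix.of_apply, hfd x hx, ContinuousLinearMap.add_apply, Pi.add_apply]
    have : linA w (Pi.single j (1:ℝ), (0:ℝ)) = (0:ℝ) • w := by simp [linA]
    rw [this]; simp
  have hsob' : SobOn p φ' stripset := by
    refine ⟨fun x hx => (hsob.1 x hx).add (hdiffl x), ?_, ?_⟩
    · exact hsob.2.1.add (sobOn_linφ hp w).2.1
    · have hm : MemLp (fun x => fderiv ℝ φ x + linA w) (ENNReal.ofReal p)
          (volume.restrict stripset) :=
        MemLp.add (f := fun x => fderiv ℝ φ x) (g := fun _ => linA w) hsob.2.2 (memLp_const (linA w))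
      refine MemLp.ae_eq ?_ hm
      rw [Filter.EventuallyEq, ae_restrict_iff' measurableSet_stripset]
      exact Filter.Eventually.of_forall fun x hx => (hfd x hx).symm
  have hper' : QPeriodic φ' := by
    intro x k
    show φ (x.1 + fun j => (k j : ℝ), x.2) + linφ w (x.1 + fun j => (k j : ℝ), x.2)
        = φ x + linφ w x
    rw [hper x k]
    rfl
  have hcon' : (L / 2) • (∫ x in stripset, D3 φ' x) = z' := by
    have h1 : (∫ x in stripset, D3 φ' x) = ∫ x in stripset, (D3 φ x + w) :=
      setIntegral_congr_fun measurableSet_stripset fun x hx => hD3 x hx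
    have h2 : (∫ x in stripset, (D3 φ x + w)) = (∫ x in stripset, D3 φ x) + (2:ℝ) • w := by
      rw [integral_add (integrableOn_D3 hp hsob) (integrable_const w), setIntegral_const,
        measureReal_def, volume_stripset_toReal]
    rw [h1, h2, smul_add, hcon, smul_smul]
    have : L / 2 * 2 = L := by ring
    rw [this, hLw]
    funext i
    simp
  set m : E2 × ℝ → M33 := fun x => cols (Fb + Dalpha φ x) (L • D3 φ x) with hmdef
  have hmΔ : ∀ x ∈ stripset, cols (Fb' + Dalpha φ' x) (L • D3 φ' x) = m x + Δ := by
    intro x hx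
    have hmx : m x = cols (Fb + Dalpha φ x) (L • D3 φ x) := rfl
    rw [hmx, hΔdef, hDα x hx, hD3 x hx, smul_add, hLw, ← cols_add]
    congr 1 <;> abel
  have hmem' : ((1:ℝ)/2) * (∫ x in stripset,
      QW x.2 (cols (Fb' + Dalpha φ' x) (L • D3 φ' x))) ∈ QstarSet QW p Fb' z' := by
    exact ⟨L, hL, φ', hsob', hper', hcon', by norm_num⟩
  -- integrabilities
  have I1 : Integrable (fun x => QW x.2 (m x)) (volume.restrict stripset) := by
    have := integrable_QW_colsmap hp hβ hβ' hmeas hgrowth hlip hsob Fb 0 L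
    simpa [zero_add] using this
  have I3 : Integrable (fun x => mnorm33 (m x) ^ p) (volume.restrict stripset) := by
    have := integrable_colsmap_rpow hp hsob Fb 0 L
    simpa [zero_add] using this
  have hshape : ∀ x : E2 × ℝ, m x + Δ
      = cols ((Fb + (Fb' - Fb)) + Dalpha φ x) ((z' - z) + L • D3 φ x) := by
    intro x
    rw [hmdef]
    have h1 : (Fb + (Fb' - Fb)) + Dalpha φ x = (Fb + Dalpha φ x) + (Fb' - Fb) := by abel
    have h2 : (z' - z) + L • D3 φ x = (L • D3 φ x) + (z' - z) := by abel
    rw [h1, h2, cols_add]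
  have I2 : Integrable (fun x => QW x.2 (m x + Δ)) (volume.restrict stripset) := by
    refine (integrable_QW_colsmap hp hβ hβ' hmeas hgrowth hlip hsob
      (Fb + (Fb' - Fb)) (z' - z) L).congr ?_
    exact Filter.Eventually.of_forall fun x => (congrArg (QW x.2) (hshape x)).symm
  have hInt1 : (∫ x in stripset, QW x.2 (m x)) = 2 * c := by
    rw [hceq]; ring
  have hIp : (∫ x in stripset, mnorm33 (m x) ^ p) ≤ 2 * c / β' := by
    have h : (∫ x in stripset, β' * mnorm33 (m x) ^ p) ≤ ∫ x in stripset, QW x.2 (m x) :=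
      integral_mono (I3.const_mul β') I1 fun x => (hgrowth x.2 (m x)).1
    have h2 : (∫ x in stripset, β' * mnorm33 (m x) ^ p)
        = β' * ∫ x in stripset, mnorm33 (m x) ^ p := integral_const_mul _ _
    rw [h2, hInt1] at h
    rw [le_div_iff₀ hβ']
    linarith [mul_comm β' (∫ x in stripset, mnorm33 (m x) ^ p)]
  have h2p : (0:ℝ) < 2 ^ p := Real.rpow_pos_of_pos (by norm_num) p
  -- pointwise estimate
  have hpt : ∀ x : E2 × ℝ, QW x.2 (m x + Δ) ≤
      QW x.2 (m x) + β * δ * (1+2^p) * mnorm33 (m x) ^ p + β * δ * (3 + 2^p * δ^p) := by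
    intro x
    set a := mnorm33 (m x) with hadef
    have ha0 : 0 ≤ a := mnorm33_nonneg _
    have hsub : (m x + Δ) - m x = Δ := by abel
    have habs := hlip x.2 (m x + Δ) (m x)
    rw [hsub] at habs
    have h1 : QW x.2 (m x + Δ) - QW x.2 (m x)
        ≤ β * (1 + mnorm33 (m x + Δ) ^ (p-1) + a ^ (p-1)) * δ :=
      le_trans (le_abs_self _) habs
    have htr : mnorm33 (m x + Δ) ≤ a + δ := mnorm33_triangle _ _
    have h2 : mnorm33 (m x + Δ) ^ (p-1) ≤ 1 + 2^p * (a^p + δ^p) := by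
      refine le_trans (rpow_pm1_le (mnorm33_nonneg _) hp.le) ?_
      have h3 : mnorm33 (m x + Δ) ^ p ≤ (a + δ) ^ p :=
        Real.rpow_le_rpow (mnorm33_nonneg _) htr (by linarith)
      have h4 : (a + δ) ^ p ≤ 2^p * (a^p + δ^p) := add_rpow_le ha0 hδ0 (by linarith)
      linarith
    have h5 : a ^ (p-1) ≤ 1 + a^p := rpow_pm1_le ha0 hp.le
    have hap : (0:ℝ) ≤ a ^ p := Real.rpow_nonneg ha0 p
    have hdp : (0:ℝ) ≤ δ ^ p := Real.rpow_nonneg hδ0 p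
    nlinarith [mul_le_mul_of_nonneg_right
      (add_le_add (add_le_add_left h2 1) h5) (mul_nonneg hβ.le hδ0)]
  -- integrate the estimate
  have hRint : Integrable (fun x => QW x.2 (m x) + β * δ * (1+2^p) * mnorm33 (m x) ^ p
      + β * δ * (3 + 2^p * δ^p)) (volume.restrict stripset) :=
    (I1.add (I3.const_mul _)).add (integrable_const _)
  have hImono : (∫ x in stripset, QW x.2 (m x + Δ))
      ≤ ∫ x in stripset, (QW x.2 (m x) + β * δ * (1+2^p) * mnorm33 (m x) ^ p
          + β * δ * (3 + 2^p * δ^p)) := integral_mono I2 hRint hpt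
  have e1 : (∫ x in stripset, (QW x.2 (m x) + β * δ * (1+2^p) * mnorm33 (m x) ^ p
      + β * δ * (3 + 2^p * δ^p)))
      = (∫ x in stripset, (QW x.2 (m x) + β * δ * (1+2^p) * mnorm33 (m x) ^ p))
        + ∫ _x in stripset, β * δ * (3 + 2^p * δ^p) :=
    integral_add (I1.add (I3.const_mul _)) (integrable_const _)
  have e2 : (∫ x in stripset, (QW x.2 (m x) + β * δ * (1+2^p) * mnorm33 (m x) ^ p))
      = (∫ x in stripset, QW x.2 (m x))
        + ∫ x in stripset, β * δ * (1+2^p) * mnorm33 (m x) ^ p :=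
    integral_add I1 (I3.const_mul _)
  have e3 : (∫ x in stripset, β * δ * (1+2^p) * mnorm33 (m x) ^ p)
      = β * δ * (1+2^p) * ∫ x in stripset, mnorm33 (m x) ^ p := integral_const_mul _ _
  have e4 : (∫ _x in stripset, β * δ * (3 + 2^p * δ^p))
      = 2 * (β * δ * (3 + 2^p * δ^p)) := by
    rw [setIntegral_const, measureReal_def, volume_stripset_toReal, smul_eq_mul]
  have hfinal : (∫ x in stripset, QW x.2 (m x + Δ))
      ≤ 2*c + β * δ * (1+2^p) * (2*c/β') + 2 * (β * δ * (3 + 2^p * δ^p)) := by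
    rw [e1, e2, e3, e4, hInt1] at hImono
    have hcoef : (0:ℝ) ≤ β * δ * (1+2^p) := by positivity
    nlinarith [mul_le_mul_of_nonneg_left hIp hcoef]
  -- conclude
  have hQle : Qstar QW p Fb' z' ≤ ((1:ℝ)/2) * (∫ x in stripset,
      QW x.2 (cols (Fb' + Dalpha φ' x) (L • D3 φ' x))) :=
    csInf_le (bddBelow_QstarSet hβ' hgrowth Fb' z') hmem'
  have hcongr : (∫ x in stripset, QW x.2 (cols (Fb' + Dalpha φ' x) (L • D3 φ' x)))
      = ∫ x in stripset, QW x.2 (m x + Δ) :=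
    setIntegral_congr_fun measurableSet_stripset fun x hx => by rw [hmΔ x hx]
  rw [hcongr] at hQle
  have h2pow : (2:ℝ)^(p+1) = 2 * 2^p := by
    rw [Real.rpow_add (by norm_num : (0:ℝ) < 2), Real.rpow_one]; ring
  calc Qstar QW p Fb' z' ≤ ((1:ℝ)/2) * (∫ x in stripset, QW x.2 (m x + Δ)) := hQle
    _ ≤ ((1:ℝ)/2) * (2*c + β * δ * (1+2^p) * (2*c/β') + 2 * (β * δ * (3 + 2^p * δ^p))) := by
        linarith [hfinal]
    _ = c + (β/2) * δ * (6 + (1+2^p) * (2*c/β') + 2^(p+1) * δ ^ p) := by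
        rw [h2pow]; ring

end keylem

-- convergence helpers
lemma mnorm33_neg (A : M33) : mnorm33 (-A) = mnorm33 A := by
  rw [mnorm33, mnorm33]
  congr 1
  refine Finset.sum_congr rfl fun i _ => Finset.sum_congr rfl fun j _ => ?_
  simp [Matrix.neg_apply]

lemma mnorm33_sub_le (A B : M33) : mnorm33 (A - B) ≤ mnorm33 A + mnorm33 B := by
  have h := mnorm33_triangle A (-B)
  rw [mnorm33_neg] at h
  simpa [sub_eq_add_neg] using h

lemma cols_sub (A B : M32) (u v : E3) : cols (A - B) (u - v) = cols A u - cols B v := by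
  ext i j
  by_cases hj : (j : ℕ) ≤ 1 <;> simp [cols, hj, Matrix.sub_apply]

lemma continuous_eucl32 : Continuous eucl32 := by
  have h : Continuous fun F : M32 => (fun ij : Fin 3 × Fin 2 => F ij.1 ij.2) :=
    continuous_pi fun ij => (continuous_apply ij.2).comp
      (continuous_apply (A := fun _ : Fin 3 => Fin 2 → ℝ) ij.1)
  exact (PiLp.continuous_toLp 2 _).comp h

lemma continuous_eucl3 : Continuous eucl3 :=
  PiLp.continuous_toLp 2 _

lemma tendsto_mnorm32_sub {Fn : ℕ → M32} {Fb : M32} (h : Tendsto Fn atTop (nhds Fb)) :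
    Tendsto (fun n => mnorm32 (Fb - Fn n)) atTop (nhds 0) := by
  have h1 : Tendsto (fun n => Fb - Fn n) atTop (nhds 0) := by
    simpa using (tendsto_const_nhds (x := Fb)).sub h
  have h2 : Tendsto (fun n => eucl32 (Fb - Fn n)) atTop (nhds (eucl32 0)) :=
    (continuous_eucl32.tendsto 0).comp h1
  have h3 : eucl32 (0 : M32) = 0 := rfl
  rw [h3] at h2
  have h4 : Tendsto (fun n => ‖eucl32 (Fb - Fn n)‖) atTop (nhds 0) := by
    simpa [Function.comp_def] using (continuous_norm.tendsto (0 : EuclideanSpace ℝ (Fin 3 × Fin 2))).comp h2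
  refine h4.congr fun n => (mnorm32_eq _).symm

lemma tendsto_vnorm3_sub {zn : ℕ → E3} {z : E3} (h : Tendsto zn atTop (nhds z)) :
    Tendsto (fun n => vnorm3 (z - zn n)) atTop (nhds 0) := by
  have h1 : Tendsto (fun n => z - zn n) atTop (nhds 0) := by
    simpa using (tendsto_const_nhds (x := z)).sub h
  have h2 : Tendsto (fun n => eucl3 (z - zn n)) atTop (nhds (eucl3 0)) :=
    (continuous_eucl3.tendsto 0).comp h1
  have h3 : eucl3 (0 : E3) = 0 := rfl
  rw [h3] at h2
  have h4 : Tendsto (fun n => ‖eucl3 (z - zn n)‖) atTop (nhds 0) := by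
    simpa [Function.comp_def] using (continuous_norm.tendsto (0 : EuclideanSpace ℝ (Fin 3))).comp h2
  refine h4.congr fun n => (vnorm3_eq _).symm

theorem stmt9' (p β β' : ℝ) (hp : 1 < p) (hβ : 0 < β) (hβ' : 0 < β')
    (QW : ℝ → M33 → ℝ)
    (hmeas : ∀ F, Measurable fun t => QW t F)
    (hgrowth : ∀ t F, β' * mnorm33 F ^ p ≤ QW t F ∧ QW t F ≤ β * (1 + mnorm33 F ^ p))
    (hlip : ∀ t F₁ F₂,
      |QW t F₁ - QW t F₂| ≤
        β * (1 + mnorm33 F₁ ^ (p - 1) + mnorm33 F₂ ^ (p - 1)) * mnorm33 (F₁ - F₂))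
    (Fn : ℕ → M32) (Fb : M32) (zn : ℕ → E3) (z : E3)
    (hFn : Tendsto Fn atTop (nhds Fb)) (hzn : Tendsto zn atTop (nhds z)) :
    Qstar QW p Fb z ≤ Filter.liminf (fun n => Qstar QW p (Fn n) (zn n)) atTop := by
  set f : ℕ → ℝ := fun n => Qstar QW p (Fn n) (zn n) with hfdef
  set ℓ : ℝ := Filter.liminf f atTop with hldef
  set d : ℕ → ℝ := fun n => mnorm33 (cols (Fb - Fn n) (z - zn n)) with hddef
  have hd0 : ∀ n, 0 ≤ d n := fun n => mnorm33_nonneg _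
  have hdto : Tendsto d atTop (nhds 0) := by
    have hb : ∀ n, d n ≤ mnorm32 (Fb - Fn n) + vnorm3 (z - zn n) := fun n =>
      mnorm33_cols_le _ _
    have hlim : Tendsto (fun n => mnorm32 (Fb - Fn n) + vnorm3 (z - zn n)) atTop (nhds 0) := by
      simpa using (tendsto_mnorm32_sub hFn).add (tendsto_vnorm3_sub hzn)
    exact squeeze_zero hd0 hb hlim
  have hf0 : ∀ n, 0 ≤ f n := fun n => Qstar_nonneg hp hβ' hgrowth _ _
  -- eventual upper bound for f
  set M : ℝ := mnorm33 (cols Fb z) with hMdef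
  have hM0 : 0 ≤ M := mnorm33_nonneg _
  have hfb : ∀ n, f n ≤ β * (1 + mnorm33 (cols (Fn n) (zn n)) ^ p) := fun n =>
    Qstar_le_bound hp hβ hβ' hmeas hgrowth _ _
  have hcols_le : ∀ n, mnorm33 (cols (Fn n) (zn n)) ≤ M + d n := by
    intro n
    have h1 : cols (Fn n) (zn n) = cols Fb z - cols (Fb - Fn n) (z - zn n) := by
      rw [← cols_sub, sub_sub_cancel, sub_sub_cancel]
    rw [h1]
    exact mnorm33_sub_le _ _
  have hfUb : ∀ᶠ n in atTop, f n ≤ β * (1 + (M + 1) ^ p) := by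
    filter_upwards [hdto.eventually (eventually_le_nhds (by norm_num : (0:ℝ) < 1))] with n hn
    refine (hfb n).trans ?_
    have h2 : mnorm33 (cols (Fn n) (zn n)) ^ p ≤ (M + 1) ^ p := by
      refine Real.rpow_le_rpow (mnorm33_nonneg _) ?_ (by linarith)
      have := hcols_le n
      linarith
    nlinarith
  have hbdd : IsBoundedUnder (· ≤ ·) atTop f := ⟨β * (1 + (M + 1) ^ p), hfUb⟩
  have hcob : IsCoboundedUnder (· ≥ ·) atTop f := hbdd.isCoboundedUnder_ge
  -- main estimate
  refine le_of_forall_pos_le_add fun ε hε => ?_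
  set η : ℝ := min (ε/4) 1 with hηdef
  have hη0 : 0 < η := lt_min (by linarith) one_pos
  have hη1 : η ≤ 1 := min_le_right _ _
  have hηε : η ≤ ε/4 := min_le_left _ _
  have h2p : (0:ℝ) < 2 ^ p := Real.rpow_pos_of_pos (by norm_num) p
  set B : ℝ := 6 + (1+2^p) * (2*(ℓ+2)/β') + 2^(p+1) with hBdef
  have hlB : 0 ≤ ℓ + 2 := by
    have : 0 ≤ ℓ := le_liminf_of_le hcob (Filter.Eventually.of_forall hf0)
    linarith
  have hB0 : 0 < B := by
    have h1 : 0 ≤ (1+2^p) * (2*(ℓ+2)/β') := by positivity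
    have h2 : 0 < (2:ℝ)^(p+1) := Real.rpow_pos_of_pos (by norm_num) _
    rw [hBdef]; linarith
  -- frequently small f together with eventually small d
  have hfreq : ∃ᶠ n in atTop, f n < ℓ + η :=
    frequently_lt_of_liminf_lt hcob (by linarith)
  have hev : ∀ᶠ n in atTop, d n ≤ 1 ∧ (β/2) * d n * B ≤ ε/2 := by
    have hsmall : (0:ℝ) < min 1 ((ε/2) / ((β/2) * B + 1)) := by
      refine lt_min one_pos ?_
      positivity
    filter_upwards [hdto.eventually (eventually_le_nhds hsmall)] with n hn
    have hn1 : d n ≤ 1 := hn.trans (min_le_left _ _)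
    have hn2 : d n ≤ (ε/2) / ((β/2) * B + 1) := hn.trans (min_le_right _ _)
    refine ⟨hn1, ?_⟩
    have h3 : (β/2) * d n * B ≤ ((β/2) * B + 1) * d n := by nlinarith [hd0 n]
    have h4 : ((β/2) * B + 1) * d n ≤ ((β/2) * B + 1) * ((ε/2) / ((β/2) * B + 1)) :=
      mul_le_mul_of_nonneg_left hn2 (by positivity)
    have h5 : ((β/2) * B + 1) * ((ε/2) / ((β/2) * B + 1)) = ε/2 := by
      field_simp
    calc (β/2) * d n * B ≤ ((β/2) * B + 1) * d n := h3
      _ ≤ ε/2 := by rw [← h5]; exact h4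
  obtain ⟨n, hfn, hdn1, hdn2⟩ := (hfreq.and_eventually hev).exists
  have hsInf : sInf (QstarSet QW p (Fn n) (zn n)) < f n + η :=
    lt_add_of_pos_right _ hη0
  obtain ⟨c, hcmem, hclt⟩ :=
    exists_lt_of_csInf_lt (QstarSet_nonempty hp (Fn n) (zn n)) hsInf
  have hc0 : 0 ≤ c := mem_QstarSet_nonneg hβ' hgrowth hcmem
  have hcle : c ≤ ℓ + 2 := by
    have : f n < ℓ + η := hfn
    linarith
  have hkey : Qstar QW p Fb z ≤ c + (β/2) * d n *
      (6 + (1+2^p) * (2*c/β') + 2^(p+1) * d n ^ p) :=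
    key_lemma hp hβ hβ' hmeas hgrowth hlip (Fn n) Fb (zn n) z hcmem
  have hdp1 : d n ^ p ≤ 1 := Real.rpow_le_one (hd0 n) hdn1 (by linarith)
  have hbr : 6 + (1+2^p) * (2*c/β') + 2^(p+1) * d n ^ p ≤ B := by
    have h1 : 2*c/β' ≤ 2*(ℓ+2)/β' := by
      rw [div_le_div_iff₀ hβ' hβ']; nlinarith
    have h1' : (1+2^p) * (2*c/β') ≤ (1+2^p) * (2*(ℓ+2)/β') :=
      mul_le_mul_of_nonneg_left h1 (by positivity)
    have h2pp : (0:ℝ) < 2^(p+1) := Real.rpow_pos_of_pos (by norm_num) _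
    have h2' : 2^(p+1) * d n ^ p ≤ 2^(p+1) := by nlinarith
    rw [hBdef]; linarith
  calc Qstar QW p Fb z
      ≤ c + (β/2) * d n * (6 + (1+2^p) * (2*c/β') + 2^(p+1) * d n ^ p) := hkey
    _ ≤ (ℓ + 2*η) + (β/2) * d n * B := by
        refine add_le_add (by linarith [hfn, hclt]) ?_
        exact mul_le_mul_of_nonneg_left hbr
          (mul_nonneg (by linarith : (0:ℝ) ≤ β/2) (hd0 n))
    _ ≤ ℓ + ε := by linarith [hdn2, hηε]

/-- Lower semicontinuity of Q*W(x₀;·|·), using additionally the coercivity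
β'|F|^p ≤ QW(x;F): if F̄_n → F̄ and z_n → z then
Q*W(x₀;F̄|z) ≤ liminf_n Q*W(x₀;F̄_n|z_n). -/
theorem stmt9 (p β β' : ℝ) (hp : 1 < p) (hβ : 0 < β) (hβ' : 0 < β')
    (QW : ℝ → M33 → ℝ)
    (hmeas : ∀ F, Measurable fun t => QW t F)
    (hgrowth : ∀ t F, β' * mnorm33 F ^ p ≤ QW t F ∧ QW t F ≤ β * (1 + mnorm33 F ^ p))
    (hlip : ∀ t F₁ F₂,
      |QW t F₁ - QW t F₂| ≤
        β * (1 + mnorm33 F₁ ^ (p - 1) + mnorm33 F₂ ^ (p - 1)) * mnorm33 (F₁ - F₂))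
    (Fn : ℕ → M32) (Fb : M32) (zn : ℕ → E3) (z : E3)
    (hFn : Tendsto Fn atTop (nhds Fb)) (hzn : Tendsto zn atTop (nhds z)) :
    Qstar QW p Fb z ≤ Filter.liminf (fun n => Qstar QW p (Fn n) (zn n)) atTop :=
  stmt9' p β β' hp hβ hβ' QW hmeas hgrowth hlip Fn Fb zn z hFn hzn
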